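/- arXiv:1712.06033 — 3 statements merged into one kernel-verified Lean document; each statement's English description precedes it below -/
import Mathlib

section
/- Let h : Q → P be a contraction morphism of positive opetopes and p ∈ P_k. Then the set of non-degenerating k-faces in the fiber over p, namely h^{-1}(p) − ker(h), is a <^+-interval in Q_k. -/
open scoped Classical

structure PHg where
  Face : ℕ → Type
  fin : ∀ k, Finite (Face k)
  γ : ∀ k, Face (k+1) → Face k
  δ : ∀ k, Face (k+1) → Face k → Prop
  δ_total : ∀ k a, ∃ x, δ k a x
  δ0_fun : ∀ (a : Face 1) (x y : Face 0), δ 0 a x → δ 0 a y → x = y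
  bounded : ∃ n, ∀ k, n < k → IsEmpty (Face k)

abbrev PHg.FaceS (S : PHg) : Type := Σ k, S.Face k

/-- The codomain operation, viewed on faces of arbitrary dimension
(identity in dimension 0). -/
def gammaS (S : PHg) : S.FaceS → S.FaceS
  | ⟨0, x⟩ => ⟨0, x⟩
  | ⟨k+1, x⟩ => ⟨k, S.γ k x⟩

/-- `x ∈ δ(q)`. -/
def inDelta (S : PHg) (x q : S.FaceS) : Prop :=
  match q with
  | ⟨0, _⟩ => False
  | ⟨k+1, a⟩ => ∃ h : x.1 = k, S.δ k a (h ▸ x.2)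

/-- `x = γ(q)` (for `q` of positive dimension). -/
def inGammaS (S : PHg) (x q : S.FaceS) : Prop := 0 < q.1 ∧ gammaS S q = x

/-- `x ∈ ∂(q) = {γ(q)} ∪ δ(q)`. -/
def inBoundary (S : PHg) (x q : S.FaceS) : Prop := inGammaS S x q ∨ inDelta S x q

def covPlus (S : PHg) (a b : S.FaceS) : Prop :=
  ∃ α, inDelta S a α ∧ gammaS S α = b

/-- The upper order `<⁺`. -/
def ltPlus (S : PHg) : S.FaceS → S.FaceS → Prop := Relation.TransGen (covPlus S)

def lePlus (S : PHg) (a b : S.FaceS) : Prop := a = b ∨ ltPlus S a b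

def perpPlus (S : PHg) (a b : S.FaceS) : Prop := ltPlus S a b ∨ ltPlus S b a

def covMinus (S : PHg) (a b : S.FaceS) : Prop := 0 < a.1 ∧ inDelta S (gammaS S a) b

/-- The lower order `<⁻`. -/
def ltMinus (S : PHg) : S.FaceS → S.FaceS → Prop := Relation.TransGen (covMinus S)

def perpMinus (S : PHg) (a b : S.FaceS) : Prop := ltMinus S a b ∨ ltMinus S b a

/-- Iterated codomain `γ^{(k)}`. -/
def gammaIter (S : PHg) (k : ℕ) (p : S.FaceS) : S.FaceS := (gammaS S)^[p.1 - k] p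

/-- `X` is a `<⁺`-interval. -/
def IntervalPlus (S : PHg) (X : Set S.FaceS) : Prop :=
  X = ∅ ∨ ∃ x0 x1, lePlus S x0 x1 ∧ X = {x | lePlus S x0 x ∧ lePlus S x x1}

def hasDim (S : PHg) (n : ℕ) : Prop :=
  Nonempty (S.Face n) ∧ ∀ k, n < k → IsEmpty (S.Face k)

/-- A positive opetope: a nonempty positive hypergraph satisfying globularity,
strictness, disjointness, pencil linearity, and having at most one face outside
`δ(S_{k+1})` in each dimension. -/
structure IsOpetope (S : PHg) : Prop where
  ne : Nonempty (S.Face 0)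
  glob_gamma : ∀ a : S.FaceS, 2 ≤ a.1 →
    ({gammaS S (gammaS S a)} : Set S.FaceS) =
      {x | ∃ y, inDelta S y a ∧ gammaS S y = x} \ {x | ∃ y, inDelta S y a ∧ inDelta S x y}
  glob_delta : ∀ a : S.FaceS, 2 ≤ a.1 →
    {x | inDelta S x (gammaS S a)} =
      {x | ∃ y, inDelta S y a ∧ inDelta S x y} \ {x | ∃ y, inDelta S y a ∧ gammaS S y = x}
  strict : ∀ a, ¬ ltPlus S a a
  linear0 : ∀ a b : S.FaceS, a.1 = 0 → b.1 = 0 → a = b ∨ perpPlus S a b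
  disj : ∀ a b : S.FaceS, 0 < a.1 → ¬ (perpMinus S a b ∧ perpPlus S a b)
  pencil_gamma : ∀ x a b, inGammaS S x a → inGammaS S x b → a = b ∨ perpPlus S a b
  pencil_delta : ∀ x a b, inDelta S x a → inDelta S x b → a = b ∨ perpPlus S a b
  size_le_one : ∀ k (a b : S.Face k),
    (¬ ∃ α : S.Face (k+1), S.δ k α a) → (¬ ∃ α : S.Face (k+1), S.δ k α b) → a = b
/-- A contraction morphism (`ι`-map) of positive opetopes. -/
structure IotaMap (Q P : PHg) where
  f : Q.FaceS → P.FaceS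
  dim_le : ∀ q, (f q).1 ≤ q.1
  gamma_pres : ∀ (k : ℕ) (q : Q.FaceS), f (gammaIter Q k q) = gammaIter P k (f q)
  dom_eq : ∀ q : Q.FaceS, 0 < q.1 → (f q).1 = q.1 →
      (∀ x, inDelta Q x q → (f x).1 = x.1 → inDelta P (f x) (f q)) ∧
      (∀ x y, inDelta Q x q → (f x).1 = x.1 → inDelta Q y q → (f y).1 = y.1 →
        f x = f y → x = y) ∧
      (∀ z, inDelta P z (f q) → ∃ x, inDelta Q x q ∧ (f x).1 = x.1 ∧ f x = z)
  dom_one : ∀ q : Q.FaceS, (f q).1 + 1 = q.1 →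
      (∀ x, inDelta Q x q → (f x).1 = x.1 → f x = f q) ∧
      (∃! x, inDelta Q x q ∧ (f x).1 = x.1)
  dom_more : ∀ q : Q.FaceS, (f q).1 + 2 ≤ q.1 → ∀ x, inDelta Q x q → (f x).1 < x.1

/-! Over a fixed `p`, the non-degenerate faces of the fiber are pairwise `≤⁺`-comparable, and
the fiber is `≤⁺`-convex because non-degeneracy propagates up `<⁺` and `h` is `≤⁺`-monotone
there; a finite convex chain is an interval.

Comparability is proved by induction on dimension. If `γ q₁ <⁺ γ q₂`, every cover along that
chain lies in `δ β` for a face `β` that `h` collapses (a non-collapsed `β` would give a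
`<⁺`-cycle over `γ p`), and these faces form a `⋖⁻`-chain from `q₁` to some `β <⁺ q₂`.
Pushing `⋖⁻` past `<⁺` (the mixing lemma, from globularity and pencil linearity) makes `q₁` and
`q₂` comparable unless `q₁ <⁻ q₂`, which would again give a `<⁺`-cycle in `P`. -/

section Order

variable {S : PHg}

lemma inDelta_dim {x q : S.FaceS} (h : inDelta S x q) : x.1 + 1 = q.1 := by
  obtain ⟨_ | n, a⟩ := q
  · exact h.elim
  · obtain ⟨hx, -⟩ := h
    simp [hx]

lemma gammaS_dim {q : S.FaceS} (h : 0 < q.1) : (gammaS S q).1 + 1 = q.1 := by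
  obtain ⟨_ | n, a⟩ := q
  · exact absurd h (lt_irrefl 0)
  · rfl

lemma covPlus_dim {a b : S.FaceS} (h : covPlus S a b) : a.1 = b.1 := by
  obtain ⟨α, haα, rfl⟩ := h
  have := inDelta_dim haα
  have := gammaS_dim (q := α) (by omega)
  omega

lemma lePlus_iff_reflTransGen {a b : S.FaceS} :
    lePlus S a b ↔ Relation.ReflTransGen (covPlus S) a b := by
  rw [Relation.reflTransGen_iff_eq_or_transGen, eq_comm]
  rfl

lemma lePlus_refl (a : S.FaceS) : lePlus S a a := Or.inl rfl

lemma lePlus_trans {a b c : S.FaceS} (hab : lePlus S a b) (hbc : lePlus S b c) :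
    lePlus S a c := by
  rw [lePlus_iff_reflTransGen] at *
  exact hab.trans hbc

lemma ltPlus_of_lePlus_of_ltPlus {a b c : S.FaceS} (hab : lePlus S a b) (hbc : ltPlus S b c) :
    ltPlus S a c := by
  rcases hab with rfl | hab
  exacts [hbc, hab.trans hbc]

lemma lePlus_dim {a b : S.FaceS} (h : lePlus S a b) : a.1 = b.1 := by
  rw [lePlus_iff_reflTransGen] at h
  induction h with
  | refl => rfl
  | tail _ hbc ih => exact ih.trans (covPlus_dim hbc)

lemma lePlus_total_of_eq_or_perpPlus {a b : S.FaceS} (h : a = b ∨ perpPlus S a b) :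
    lePlus S a b ∨ lePlus S b a := by
  rcases h with rfl | hab | hba
  exacts [Or.inl (lePlus_refl a), Or.inl (Or.inr hab), Or.inr (Or.inr hba)]

lemma finite_faceS (S : PHg) : Finite S.FaceS := by
  obtain ⟨n, hn⟩ := S.bounded
  have : ∀ k, Finite (S.Face k) := S.fin
  refine Finite.of_surjective (fun x : Σ k : Fin (n + 1), S.Face k => (⟨x.1, x.2⟩ : S.FaceS)) ?_
  rintro ⟨k, x⟩
  have hk : k < n + 1 := by
    by_contra hk
    exact (hn k (by omega)).false x
  exact ⟨⟨⟨k, hk⟩, x⟩, rfl⟩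

end Order

namespace IsOpetope

variable {S : PHg}

lemma lePlus_antisymm (hS : IsOpetope S) {a b : S.FaceS} (hab : lePlus S a b)
    (hba : lePlus S b a) : a = b := by
  rcases hab with rfl | hab
  · rfl
  · exact absurd (ltPlus_of_lePlus_of_ltPlus hba hab) (hS.strict b)

lemma wellFounded_ltPlus (hS : IsOpetope S) : WellFounded (ltPlus S) := by
  have := finite_faceS S
  have : IsTrans S.FaceS (ltPlus S) := ⟨fun _ _ _ => Relation.TransGen.trans⟩
  have : Std.Irrefl (ltPlus S) := ⟨hS.strict⟩
  exact Finite.wellFounded_of_trans_of_irrefl _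

lemma wellFounded_gtPlus (hS : IsOpetope S) : WellFounded (flip (ltPlus S)) := by
  have := finite_faceS S
  have : IsTrans S.FaceS (flip (ltPlus S)) := ⟨fun _ _ _ hab hbc => hbc.trans hab⟩
  have : Std.Irrefl (flip (ltPlus S)) := ⟨hS.strict⟩
  exact Finite.wellFounded_of_trans_of_irrefl _

lemma intervalPlus_of_total_of_convex (hS : IsOpetope S) {X : Set S.FaceS}
    (htotal : ∀ a ∈ X, ∀ b ∈ X, lePlus S a b ∨ lePlus S b a)
    (hconvex : ∀ a ∈ X, ∀ b ∈ X, ∀ c, lePlus S a c → lePlus S c b → c ∈ X) :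
    IntervalPlus S X := by
  rcases X.eq_empty_or_nonempty with hX | hX
  · exact Or.inl hX
  obtain ⟨x₀, hx₀, hmin⟩ := hS.wellFounded_ltPlus.has_min X hX
  obtain ⟨x₁, hx₁, hmax⟩ := hS.wellFounded_gtPlus.has_min X hX
  have hbot : ∀ a ∈ X, lePlus S x₀ a := by
    intro a ha
    rcases htotal x₀ hx₀ a ha with h | rfl | h
    exacts [h, lePlus_refl _, absurd h (hmin a ha)]
  have htop : ∀ a ∈ X, lePlus S a x₁ := by
    intro a ha
    rcases htotal a ha x₁ hx₁ with h | rfl | h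
    exacts [h, lePlus_refl _, absurd h (hmax a ha)]
  refine Or.inr ⟨x₀, x₁, htop x₀ hx₀, Set.ext fun c => ⟨fun hc => ⟨hbot c hc, htop c hc⟩, ?_⟩⟩
  rintro ⟨hx₀c, hcx₁⟩
  exact hconvex x₀ hx₀ x₁ hx₁ c hx₀c hcx₁

lemma lePlus_gammaS_gammaS (hS : IsOpetope S) {α : S.FaceS} (hα : 2 ≤ α.1) {y : S.FaceS}
    (hy : inDelta S y α) : lePlus S (gammaS S y) (gammaS S (gammaS S α)) := by
  suffices ∀ x y, inDelta S y α → gammaS S y = x → lePlus S x (gammaS S (gammaS S α)) from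
    this _ y hy rfl
  intro x
  induction x using hS.wellFounded_gtPlus.induction with
  | _ x ih =>
  rintro y hy rfl
  by_cases hin : ∃ y', inDelta S y' α ∧ inDelta S (gammaS S y) y'
  · obtain ⟨y', hy', hyy'⟩ := hin
    have hlt : ltPlus S (gammaS S y) (gammaS S y') := .single ⟨y', hyy', rfl⟩
    exact lePlus_trans (Or.inr hlt) (ih _ hlt y' hy' rfl)
  · have hmem : gammaS S y ∈ ({gammaS S (gammaS S α)} : Set S.FaceS) := by
      rw [hS.glob_gamma α hα]
      exact ⟨⟨y, hy, rfl⟩, hin⟩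
    exact Or.inl hmem

lemma lePlus_gammaS (hS : IsOpetope S) {a b : S.FaceS} (ha : 0 < a.1) (hab : lePlus S a b) :
    lePlus S (gammaS S a) (gammaS S b) := by
  have hdim := lePlus_dim hab
  rw [lePlus_iff_reflTransGen] at hab
  induction hab with
  | refl => exact lePlus_refl _
  | @tail b c hab hbc ih =>
    obtain ⟨α, hbα, rfl⟩ := hbc
    have hb := lePlus_dim (lePlus_iff_reflTransGen.mpr hab)
    have := inDelta_dim hbα
    exact lePlus_trans (ih hb) (hS.lePlus_gammaS_gammaS (by omega) hbα)

lemma lePlus_total_of_covPlus (hS : IsOpetope S) {y u v : S.FaceS} (hu : covPlus S y u)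
    (hv : covPlus S y v) : lePlus S u v ∨ lePlus S v u := by
  obtain ⟨α, hyα, rfl⟩ := hu
  obtain ⟨β, hyβ, rfl⟩ := hv
  have hα := inDelta_dim hyα
  have hβ := inDelta_dim hyβ
  rcases lePlus_total_of_eq_or_perpPlus (hS.pencil_delta y α β hyα hyβ) with hαβ | hβα
  · exact Or.inl (hS.lePlus_gammaS (by omega) hαβ)
  · exact Or.inr (hS.lePlus_gammaS (by omega) hβα)

lemma lePlus_total_of_lePlus (hS : IsOpetope S) {y a b : S.FaceS} (ha : lePlus S y a)
    (hb : lePlus S y b) : lePlus S a b ∨ lePlus S b a := by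
  induction y using hS.wellFounded_gtPlus.induction with
  | _ y ih =>
  rcases ha with rfl | ha
  · exact Or.inl hb
  rcases hb with rfl | hb
  · exact Or.inr (Or.inr ha)
  obtain ⟨u, hyu, hua⟩ := Relation.TransGen.head'_iff.mp ha
  obtain ⟨v, hyv, hvb⟩ := Relation.TransGen.head'_iff.mp hb
  rw [← lePlus_iff_reflTransGen] at hua hvb
  rcases hS.lePlus_total_of_covPlus hyu hyv with huv | hvu
  · exact ih u (.single hyu) hua (lePlus_trans huv hvb)
  · exact ih v (.single hyv) (lePlus_trans hvu hua) hvb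

lemma mix (hS : IsOpetope S) {a c b : S.FaceS} (hac : covMinus S a c) (hcb : covPlus S c b) :
    covMinus S a b ∨ lePlus S a b ∨ lePlus S b a := by
  obtain ⟨ha, hγa⟩ := hac
  obtain ⟨α, hcα, rfl⟩ := hcb
  have := inDelta_dim hγa
  have := inDelta_dim hcα
  have := gammaS_dim ha
  by_cases hy : ∃ y, inDelta S y α ∧ gammaS S y = gammaS S a
  · obtain ⟨y, hyα, hγy⟩ := hy
    have hyb : lePlus S y (gammaS S α) := Or.inr (.single ⟨α, hyα, rfl⟩)
    have := inDelta_dim hyα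
    rcases lePlus_total_of_eq_or_perpPlus
        (hS.pencil_gamma _ a y ⟨ha, rfl⟩ ⟨by omega, hγy⟩) with hay | hya
    · exact Or.inr (Or.inl (lePlus_trans hay hyb))
    · exact Or.inr (hS.lePlus_total_of_lePlus hya hyb)
  · refine Or.inl ⟨ha, ?_⟩
    have hmem : gammaS S a ∈ {x | inDelta S x (gammaS S α)} := by
      rw [hS.glob_delta α (by omega)]
      exact ⟨⟨c, hcα, hγa⟩, hy⟩
    exact hmem

lemma mix_lePlus (hS : IsOpetope S) {a c b : S.FaceS} (hac : covMinus S a c)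
    (hcb : lePlus S c b) : covMinus S a b ∨ lePlus S a b ∨ lePlus S b a := by
  rw [lePlus_iff_reflTransGen] at hcb
  induction hcb using Relation.ReflTransGen.head_induction_on with
  | refl => exact Or.inl hac
  | head hcc' hc'b ih =>
    rw [← lePlus_iff_reflTransGen] at hc'b
    rcases hS.mix hac hcc' with hac' | hac' | hc'a
    · exact ih hac'
    · exact Or.inr (Or.inl (lePlus_trans hac' hc'b))
    · exact Or.inr (hS.lePlus_total_of_lePlus hc'a hc'b)

lemma ltMinus_or_total_of_transGen (hS : IsOpetope S) {a b d : S.FaceS}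
    (hab : Relation.TransGen (fun x y => covMinus S x y ∧ ¬ lePlus S d y) a b)
    (hbd : lePlus S b d) : ltMinus S a d ∨ lePlus S a d ∨ lePlus S d a := by
  induction hab with
  | single hab => exact (hS.mix_lePlus hab.1 hbd).imp_left .single
  | @tail b c hab hbc ih =>
    rcases hS.mix_lePlus hbc.1 hbd with hbd' | hbd' | hdb
    · exact Or.inl ((Relation.TransGen.mono (fun _ _ => And.left) _ _ hab).tail hbd')
    · exact ih hbd'
    · obtain ⟨_, -, -, hb⟩ := Relation.TransGen.tail'_iff.mp hab
      exact absurd hdb hb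

end IsOpetope

lemma gammaIter_of_le {S : PHg} {q : S.FaceS} {m : ℕ} (hm : q.1 ≤ m) : gammaIter S m q = q := by
  rw [gammaIter, Nat.sub_eq_zero_of_le hm, Function.iterate_zero, id]

lemma gammaIter_of_eq_succ {S : PHg} {q : S.FaceS} {m : ℕ} (hm : q.1 = m + 1) :
    gammaIter S m q = gammaS S q := by
  rw [gammaIter, show q.1 - m = 1 by omega, Function.iterate_one]

namespace IotaMap

variable {Q P : PHg} (h : IotaMap Q P)

lemma map_gammaS_of_dim_eq {q : Q.FaceS} (hq : 0 < q.1) (hnd : (h.f q).1 = q.1) :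
    h.f (gammaS Q q) = gammaS P (h.f q) := by
  have := h.gamma_pres (q.1 - 1) q
  rwa [gammaIter_of_eq_succ (by omega), gammaIter_of_eq_succ (by omega)] at this

lemma map_gammaS_of_dim_succ_eq {q : Q.FaceS} (hq : (h.f q).1 + 1 = q.1) :
    h.f (gammaS Q q) = h.f q := by
  have := h.gamma_pres (h.f q).1 q
  rwa [gammaIter_of_eq_succ hq.symm, gammaIter_of_le le_rfl] at this

lemma dim_map_gammaS {q : Q.FaceS} (hq : 0 < q.1) (hnd : (h.f q).1 = q.1) :
    (h.f (gammaS Q q)).1 = (gammaS Q q).1 := by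
  have := gammaS_dim hq
  have := gammaS_dim (q := h.f q) (by omega)
  rw [h.map_gammaS_of_dim_eq hq hnd]
  omega

lemma covPlus_map {a b : Q.FaceS} (hab : covPlus Q a b) (ha : (h.f a).1 = a.1) :
    (h.f b).1 = b.1 ∧ lePlus P (h.f a) (h.f b) := by
  obtain ⟨α, haα, rfl⟩ := hab
  have hdim := inDelta_dim haα
  rcases (h.dim_le α).eq_or_lt with hα | hα
  · refine ⟨h.dim_map_gammaS (by omega) hα, Or.inr (.single ⟨h.f α, ?_, ?_⟩)⟩
    · exact (h.dom_eq α (by omega) hα).1 a haα ha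
    · exact (h.map_gammaS_of_dim_eq (by omega) hα).symm
  · have hα' : (h.f α).1 + 1 = α.1 := by
      by_contra hne
      exact absurd (h.dom_more α (by omega) a haα) (by omega)
    have hfa := (h.dom_one α hα').1 a haα ha
    have hfγ := h.map_gammaS_of_dim_succ_eq hα'
    have := gammaS_dim (q := α) (by omega)
    refine ⟨by rw [hfγ]; omega, Or.inl (hfa.trans hfγ.symm)⟩

lemma lePlus_map {a b : Q.FaceS} (hab : lePlus Q a b) (ha : (h.f a).1 = a.1) :
    (h.f b).1 = b.1 ∧ lePlus P (h.f a) (h.f b) := by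
  rw [lePlus_iff_reflTransGen] at hab
  induction hab with
  | refl => exact ⟨ha, lePlus_refl _⟩
  | tail _ hbc ih =>
    obtain ⟨hc, hbc'⟩ := h.covPlus_map hbc ih.1
    exact ⟨hc, lePlus_trans ih.2 hbc'⟩

lemma map_eq_of_lePlus_of_lePlus (hP : IsOpetope P) {a b c : Q.FaceS}
    (ha : (h.f a).1 = a.1) (hab : h.f a = h.f b) (hac : lePlus Q a c) (hcb : lePlus Q c b) :
    (h.f c).1 = c.1 ∧ h.f c = h.f a := by
  obtain ⟨hc, hac'⟩ := h.lePlus_map hac ha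
  obtain ⟨-, hcb'⟩ := h.lePlus_map hcb hc
  exact ⟨hc, hP.lePlus_antisymm (hab ▸ hcb') hac'⟩

lemma dim_map_lt_of_map_eq_gammaS (hP : IsOpetope P) {c β : Q.FaceS} (hcβ : inDelta Q c β)
    (hc : (h.f c).1 = c.1) (hcβ' : h.f c = h.f (gammaS Q β)) : (h.f β).1 < β.1 := by
  have hβ : 0 < β.1 := by have := inDelta_dim hcβ; omega
  -- a non-collapsed `β` would map the cover `c ⋖⁺ γ β` to a cover `h c ⋖⁺ h c`
  refine (h.dim_le β).lt_of_ne fun hnd => hP.strict (h.f c) (.single ⟨h.f β, ?_, ?_⟩)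
  · exact (h.dom_eq β hβ hnd).1 c hcβ hc
  · rw [hcβ', h.map_gammaS_of_dim_eq hβ hnd]

lemma exists_transGen_covMinus_of_ltPlus_gammaS (hP : IsOpetope P) {a c : Q.FaceS}
    (ha : 0 < a.1) (hnd : (h.f (gammaS Q a)).1 = (gammaS Q a).1)
    (hac : ltPlus Q (gammaS Q a) c) (hc : h.f c = h.f (gammaS Q a)) :
    ∃ β, Relation.TransGen (fun x y => covMinus Q x y ∧ (h.f y).1 < y.1) a β ∧
      gammaS Q β = c := by
  induction hac with
  | single hac =>
    obtain ⟨β, haβ, rfl⟩ := hac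
    exact ⟨β, .single ⟨⟨ha, haβ⟩, h.dim_map_lt_of_map_eq_gammaS hP haβ hnd hc.symm⟩, rfl⟩
  | @tail b c hab hbc ih =>
    obtain ⟨hb, hbγ⟩ :=
      h.map_eq_of_lePlus_of_lePlus hP hnd hc.symm (Or.inr hab) (Or.inr (.single hbc))
    obtain ⟨β, hchain, rfl⟩ := ih hbγ
    obtain ⟨β', hbβ', rfl⟩ := hbc
    have hβ' := h.dim_map_lt_of_map_eq_gammaS hP hbβ' hb (hbγ.trans hc.symm)
    obtain ⟨_, -, -, hβ⟩ := Relation.TransGen.tail'_iff.mp hchain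
    exact ⟨β', hchain.tail ⟨⟨by omega, hbβ'⟩, hβ'⟩, rfl⟩

lemma not_ltMinus_of_map_eq (hP : IsOpetope P) {q₁ q₂ : Q.FaceS} (h₁ : (h.f q₁).1 = q₁.1)
    (h₂ : (h.f q₂).1 = q₂.1) (heq : h.f q₁ = h.f q₂) : ¬ ltMinus Q q₁ q₂ := by
  intro hlt
  obtain ⟨_, ⟨hq₁, -⟩, -⟩ := Relation.TransGen.head'_iff.mp hlt
  obtain ⟨r, hq₁r, -, hrq₂⟩ := Relation.TransGen.tail'_iff.mp hlt
  have hγ : lePlus Q (gammaS Q q₁) (gammaS Q r) :=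
    lePlus_iff_reflTransGen.mpr (Relation.ReflTransGen.lift (gammaS Q)
      (fun _ b hab => ⟨b, hab.2, rfl⟩) _ _ hq₁r)
  obtain ⟨hr, hle⟩ := h.lePlus_map hγ (h.dim_map_gammaS hq₁ h₁)
  have hq₂ : 0 < q₂.1 := by have := inDelta_dim hrq₂; omega
  refine hP.strict (h.f (gammaS Q q₁))
    (ltPlus_of_lePlus_of_ltPlus hle (.single ⟨h.f q₂, ?_, ?_⟩))
  · exact (h.dom_eq q₂ hq₂ h₂).1 _ hrq₂ hr
  · rw [h.map_gammaS_of_dim_eq hq₁ h₁, heq]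

lemma lePlus_total_of_gammaS_lePlus (hQ : IsOpetope Q) (hP : IsOpetope P) {q₁ q₂ : Q.FaceS}
    (h₁ : (h.f q₁).1 = q₁.1) (h₂ : (h.f q₂).1 = q₂.1) (heq : h.f q₁ = h.f q₂)
    (hq₁ : 0 < q₁.1) (hγ : lePlus Q (gammaS Q q₁) (gammaS Q q₂)) :
    lePlus Q q₁ q₂ ∨ lePlus Q q₂ q₁ := by
  have hq₂ : 0 < q₂.1 := by rwa [← h₂, ← heq, h₁]
  rcases hγ with hγ | hγ
  · exact lePlus_total_of_eq_or_perpPlus (hQ.pencil_gamma _ q₁ q₂ ⟨hq₁, rfl⟩ ⟨hq₂, hγ.symm⟩)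
  have hγq₂ : h.f (gammaS Q q₂) = h.f (gammaS Q q₁) := by
    rw [h.map_gammaS_of_dim_eq hq₁ h₁, h.map_gammaS_of_dim_eq hq₂ h₂, heq]
  obtain ⟨β, hchain, hβ⟩ :=
    h.exists_transGen_covMinus_of_ltPlus_gammaS hP hq₁ (h.dim_map_gammaS hq₁ h₁) hγ hγq₂
  have hcollapsed : ∀ {y}, (h.f y).1 < y.1 → ¬ lePlus Q q₂ y := fun hy hle =>
    (h.lePlus_map hle h₂).1.not_lt hy
  obtain ⟨_, -, -, hβ'⟩ := Relation.TransGen.tail'_iff.mp hchain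
  have hβq₂ : lePlus Q β q₂ := by
    have hβ₀ : 0 < β.1 := by omega
    exact (lePlus_total_of_eq_or_perpPlus
      (hQ.pencil_gamma _ β q₂ ⟨hβ₀, hβ⟩ ⟨hq₂, rfl⟩)).resolve_right (hcollapsed hβ')
  have hchain' := Relation.TransGen.mono (p := fun x y => covMinus Q x y ∧ ¬ lePlus Q q₂ y)
    (fun _ _ hxy => ⟨hxy.1, hcollapsed hxy.2⟩) _ _ hchain
  exact (hQ.ltMinus_or_total_of_transGen hchain' hβq₂).resolve_left
    (h.not_ltMinus_of_map_eq hP h₁ h₂ heq)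

lemma lePlus_total_of_map_eq (hQ : IsOpetope Q) (hP : IsOpetope P) {q₁ q₂ : Q.FaceS}
    (h₁ : (h.f q₁).1 = q₁.1) (h₂ : (h.f q₂).1 = q₂.1) (heq : h.f q₁ = h.f q₂) :
    lePlus Q q₁ q₂ ∨ lePlus Q q₂ q₁ := by
  have hdim : q₁.1 = q₂.1 := by rw [← h₁, ← h₂, heq]
  induction hn : q₁.1 generalizing q₁ q₂ with
  | zero => exact lePlus_total_of_eq_or_perpPlus (hQ.linear0 q₁ q₂ hn (hdim ▸ hn))
  | succ n ih =>
    have hq₁ : 0 < q₁.1 := by omega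
    have hq₂ : 0 < q₂.1 := by omega
    have := gammaS_dim hq₁
    have := gammaS_dim hq₂
    rcases ih (h.dim_map_gammaS hq₁ h₁) (h.dim_map_gammaS hq₂ h₂)
        (by rw [h.map_gammaS_of_dim_eq hq₁ h₁, h.map_gammaS_of_dim_eq hq₂ h₂, heq])
        (by omega) (by omega) with hγ | hγ
    · exact h.lePlus_total_of_gammaS_lePlus hQ hP h₁ h₂ heq hq₁ hγ
    · exact (h.lePlus_total_of_gammaS_lePlus hQ hP h₂ h₁ heq.symm hq₂ hγ).symm

end IotaMap

theorem iota_fiber_interval_general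
    (Q P : PHg) (hQ : IsOpetope Q) (hP : IsOpetope P) (h : IotaMap Q P)
    (p : P.FaceS) :
    IntervalPlus Q {q | h.f q = p ∧ (h.f q).1 = q.1} := by
  refine hQ.intervalPlus_of_total_of_convex ?_ ?_
  · rintro a ⟨ha, ha'⟩ b ⟨hb, hb'⟩
    exact h.lePlus_total_of_map_eq hQ hP ha' hb' (ha.trans hb.symm)
  · rintro a ⟨ha, ha'⟩ b ⟨hb, -⟩ c hac hcb
    obtain ⟨hc', hc⟩ := h.map_eq_of_lePlus_of_lePlus hP ha' (ha.trans hb.symm) hac hcb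
    exact ⟨hc.trans ha, hc'⟩

/-- The set of non-degenerating faces in the fiber of a contraction
morphism over a face `p ∈ P_k` is a `<⁺`-interval. -/
theorem iota_fiber_interval
    (Q P : PHg) (hQ : IsOpetope Q) (hP : IsOpetope P) (h : IotaMap Q P)
    (k : ℕ) (p : P.FaceS) (hp : p.1 = k) :
    IntervalPlus Q {q | h.f q = p ∧ (h.f q).1 = q.1} :=
  iota_fiber_interval_general Q P hQ hP h p
end

section
/- Let P be a positive opetope of dimension n and x a face of P_k. The pencil order ≺_x on the pencil Pl_x = {a ∈ P_{k+1} : x ∈ ∂(a)} — defined by a ≺_x b iff (γ(b) = x ∈ δ(a)), or (x ∈ δ(a) ∩ δ(b) and a <^+ b), or (γ(a) = x = γ(b) and b <^+ a) — is a strict linear order on Pl_x. -/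
/-! Faces in the pencil over `x` split into those with `γ(a) = x` and those with `x ∈ δ(a)`; no face
is in both, since that would give the loop `x <⁺ x`. The pencil order puts the first kind above the
second, orders the second kind by `<⁺` and the first by `>⁺`, so strictness of `<⁺` gives a strict
order and pencil linearity makes it total. -/

open scoped Classical

/-- A restricted flag from dimension `m` down to dimension `l`,
encoded as a function `ℕ → S.FaceS` (entries outside `[l,m]` are irrelevant). -/
def IsRFlag (S : PHg) (m l : ℕ) (F : ℕ → S.FaceS) : Prop :=
  (∀ i, l ≤ i → i ≤ m → (F i).1 = i) ∧
  (∀ i, l ≤ i → i < m → inBoundary S (F i) (F (i+1)))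

/-- The pencil order `≺ₓ` on the pencil over `x`. -/
def pencilLt (S : PHg) (x a b : S.FaceS) : Prop :=
  (inGammaS S x b ∧ inDelta S x a) ∨
  (inDelta S x a ∧ inDelta S x b ∧ ltPlus S a b) ∨
  (inGammaS S x a ∧ inGammaS S x b ∧ ltPlus S b a)

/-- The sign of the flag segment `[F j, …, F l]`. -/
noncomputable def sgnSeg (S : PHg) (l : ℕ) (F : ℕ → S.FaceS) : ℕ → ℤ
  | 0 => 1
  | j+1 => if l ≤ j ∧ inDelta S (F j) (F (j+1)) then -(sgnSeg S l F j) else sgnSeg S l F j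

/-- The flag order `◁` on flags from dimension `m` down to `l`. -/
def flagLt (S : PHg) (l m : ℕ) (F G : ℕ → S.FaceS) : Prop :=
  ∃ k, l ≤ k ∧ k ≤ m ∧ (∀ i, l ≤ i → i < k → F i = G i) ∧ F k ≠ G k ∧
    ((k = 0 ∧ ltPlus S (G 0) (F 0)) ∨
     (0 < k ∧ sgnSeg S l F (k-1) = 1 ∧ pencilLt S (F (k-1)) (F k) (G k)) ∨
     (0 < k ∧ sgnSeg S l F (k-1) = -1 ∧ pencilLt S (F (k-1)) (G k) (F k)))

/-- `i` is the low level `ll` of the flag `F` (with top dimension `n`). -/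
def LowLevelT (S : PHg) (n : ℕ) (F : ℕ → S.FaceS) (i : ℕ) : Prop :=
  i + 2 ≤ n ∧ inDelta S (F (i+1)) (F (i+2)) ∧
    ∀ j, i < j → j + 2 ≤ n → ¬ inDelta S (F (j+1)) (F (j+2))

/-- Membership in `Flags[t / b]`, flags from top face `t` (dim `m`) to bottom face `b` (dim `l`). -/
def MemFlags (S : PHg) (l m : ℕ) (t b : S.FaceS) (F : ℕ → S.FaceS) : Prop :=
  IsRFlag S m l F ∧ F m = t ∧ F l = b

def EqOnFl {α : Type*} (l m : ℕ) (F G : ℕ → α) : Prop :=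
  ∀ i, l ≤ i → i ≤ m → F i = G i

/-- `G` is the successor of `F` in `Flags[t / b]` with respect to the flag order. -/
def SuccFl (S : PHg) (l m : ℕ) (t b : S.FaceS) (F G : ℕ → S.FaceS) : Prop :=
  MemFlags S l m t b F ∧ MemFlags S l m t b G ∧ flagLt S l m F G ∧
  ∀ H, MemFlags S l m t b H → flagLt S l m F H → (EqOnFl l m G H ∨ flagLt S l m G H)

section PencilOrder

variable {S : PHg}

theorem not_inGammaS_and_inDelta (hstrict : ∀ a, ¬ ltPlus S a a) {x a : S.FaceS}
    (hγ : inGammaS S x a) (hδ : inDelta S x a) : False :=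
  hstrict x (.single ⟨a, hδ, hγ.2⟩)

theorem pencilLt_irrefl (hstrict : ∀ a, ¬ ltPlus S a a) (x a : S.FaceS) :
    ¬ pencilLt S x a a := by
  rintro (⟨hγ, hδ⟩ | ⟨-, -, hlt⟩ | ⟨-, -, hlt⟩)
  · exact not_inGammaS_and_inDelta hstrict hγ hδ
  · exact hstrict a hlt
  · exact hstrict a hlt

theorem pencilLt_trans (hstrict : ∀ a, ¬ ltPlus S a a) {x a b c : S.FaceS}
    (hab : pencilLt S x a b) (hbc : pencilLt S x b c) : pencilLt S x a c := by
  have hb : inGammaS S x b → inDelta S x b → False := not_inGammaS_and_inDelta hstrict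
  rcases hab with ⟨hγb, hδa⟩ | ⟨hδa, hδb, hab⟩ | ⟨hγa, hγb, hba⟩ <;>
    rcases hbc with ⟨hγc, hδb'⟩ | ⟨hδb', hδc, hbc⟩ | ⟨hγb', hγc, hcb⟩
  · exact (hb hγb hδb').elim
  · exact (hb hγb hδb').elim
  · exact .inl ⟨hγc, hδa⟩
  · exact .inl ⟨hγc, hδa⟩
  · exact .inr (.inl ⟨hδa, hδc, hab.trans hbc⟩)
  · exact (hb hγb' hδb).elim
  · exact (hb hγb hδb').elim
  · exact (hb hγb hδb').elim
  · exact .inr (.inr ⟨hγa, hγc, hcb.trans hba⟩)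

theorem pencilLt_trichotomous
    (hγ : ∀ x a b, inGammaS S x a → inGammaS S x b → a = b ∨ perpPlus S a b)
    (hδ : ∀ x a b, inDelta S x a → inDelta S x b → a = b ∨ perpPlus S a b)
    {x a b : S.FaceS} (ha : inBoundary S x a) (hb : inBoundary S x b) :
    a = b ∨ pencilLt S x a b ∨ pencilLt S x b a := by
  rcases ha with hγa | hδa <;> rcases hb with hγb | hδb
  · rcases hγ x a b hγa hγb with h | h | h
    · exact .inl h
    · exact .inr (.inr (.inr (.inr ⟨hγb, hγa, h⟩)))
    · exact .inr (.inl (.inr (.inr ⟨hγa, hγb, h⟩)))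
  · exact .inr (.inr (.inl ⟨hγa, hδb⟩))
  · exact .inr (.inl (.inl ⟨hγb, hδa⟩))
  · rcases hδ x a b hδa hδb with h | h | h
    · exact .inl h
    · exact .inr (.inl (.inr (.inl ⟨hδa, hδb, h⟩)))
    · exact .inr (.inr (.inr (.inl ⟨hδb, hδa, h⟩)))

end PencilOrder

/-- The pencil order `≺ₓ` is a strict linear order on the pencil
`Pl_x = {a : x ∈ ∂(a)}` of a positive opetope. -/
theorem pencil_order_strict_linear
    (S : PHg) (hS : IsOpetope S) (x : S.FaceS) :
    (∀ a, inBoundary S x a → ¬ pencilLt S x a a) ∧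
    (∀ a b c, inBoundary S x a → inBoundary S x b → inBoundary S x c →
      pencilLt S x a b → pencilLt S x b c → pencilLt S x a c) ∧
    (∀ a b, inBoundary S x a → inBoundary S x b →
      a = b ∨ pencilLt S x a b ∨ pencilLt S x b a) :=
  ⟨fun a _ => pencilLt_irrefl hS.strict x a,
   fun _ _ _ _ _ _ => pencilLt_trans hS.strict,
   fun _ _ => pencilLt_trichotomous hS.pencil_gamma hS.pencil_delta⟩
end

section
/- Let P be a positive opetope, and let x_m ∈ P_m, x_k ∈ P_k with n ≥ m > k ≥ l ≥ 0. The truncation map tr : Flags_P[x_m, x_l] → Flags_P[x_k, x_l] (restricting a flag through x_k to its part below x_k) preserves the flag order and sends the initial (resp. terminal) flag to the initial (resp. terminal) flag. -/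
open scoped Classical

/-! Truncation to levels `≤ k` preserves `◁` because the level at which two flags first differ
either survives the truncation, in which case it still witnesses `◁`, or lies above `k`, in which
case the truncations coincide. For the endpoints, a flag `G` through `F k` extends to the flag
`flagSplice k G F` through the top face by following `F` above level `k`; comparing this
extension with the initial (terminal) flag `F` and truncating gives the claim. -/

def flagSplice {α : Type*} (k : ℕ) (G F : ℕ → α) : ℕ → α :=
  fun i => if i ≤ k then G i else F i

lemma flagSplice_of_le {α : Type*} {k i : ℕ} (G F : ℕ → α) (hi : i ≤ k) :
    flagSplice k G F i = G i := if_pos hi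

lemma flagSplice_of_lt {α : Type*} {k i : ℕ} (G F : ℕ → α) (hi : k < i) :
    flagSplice k G F i = F i := if_neg (Nat.not_le.mpr hi)

lemma EqOnFl.symm {α : Type*} {l m : ℕ} {F G : ℕ → α} (h : EqOnFl l m F G) : EqOnFl l m G F :=
  fun i hli him => (h i hli him).symm

lemma EqOnFl.mono {α : Type*} {l k m : ℕ} {F G : ℕ → α} (h : EqOnFl l m F G) (hkm : k ≤ m) :
    EqOnFl l k F G :=
  fun i hli hik => h i hli (hik.trans hkm)

section

variable {S : PHg} {l k m : ℕ}

lemma sgnSeg_congr {F G : ℕ → S.FaceS} :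
    ∀ {j}, (∀ i ≤ j, F i = G i) → sgnSeg S l F j = sgnSeg S l G j
  | 0, _ => rfl
  | j + 1, h => by
    rw [sgnSeg, sgnSeg, h j j.le_succ, h (j + 1) le_rfl,
      sgnSeg_congr fun i hi => h i (Nat.le_succ_of_le hi)]

lemma flagLt_congr {F G F' G' : ℕ → S.FaceS} (hF : ∀ i ≤ k, F i = F' i)
    (hG : ∀ i ≤ k, G i = G' i) (h : flagLt S l k F G) : flagLt S l k F' G' := by
  obtain ⟨j, hlj, hjk, hagree, hne, hcase⟩ := h
  have hsgn : sgnSeg S l F (j - 1) = sgnSeg S l F' (j - 1) :=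
    sgnSeg_congr fun i hi => hF i (by omega)
  refine ⟨j, hlj, hjk, fun i hli hij => ?_, ?_, ?_⟩
  · rw [← hF i (by omega), ← hG i (by omega)]
    exact hagree i hli hij
  · rwa [← hF j hjk, ← hG j hjk]
  · rwa [← hF 0 (Nat.zero_le k), ← hG 0 (Nat.zero_le k), ← hF (j - 1) (by omega),
      ← hF j hjk, ← hG j hjk, ← hsgn]

lemma flagLt_truncate {F G : ℕ → S.FaceS} (h : flagLt S l m F G) :
    EqOnFl l k F G ∨ flagLt S l k F G := by
  obtain ⟨j, hlj, hjm, hagree, hne, hcase⟩ := h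
  by_cases hjk : j ≤ k
  · exact Or.inr ⟨j, hlj, hjk, hagree, hne, hcase⟩
  · exact Or.inl fun i hli hik => hagree i hli (by omega)

lemma eqOnFl_or_flagLt_truncate {F G : ℕ → S.FaceS} (hkm : k ≤ m)
    (h : EqOnFl l m F G ∨ flagLt S l m F G) : EqOnFl l k F G ∨ flagLt S l k F G :=
  h.elim (fun heq => Or.inl (heq.mono hkm)) flagLt_truncate

lemma eqOnFl_or_flagLt_congr {F G F' G' : ℕ → S.FaceS} (hF : ∀ i ≤ k, F i = F' i)
    (hG : ∀ i ≤ k, G i = G' i) (h : EqOnFl l k F G ∨ flagLt S l k F G) :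
    EqOnFl l k F' G' ∨ flagLt S l k F' G' := by
  refine h.imp (fun heq i hli hik => ?_) (flagLt_congr hF hG)
  rw [← hF i hik, ← hG i hik]
  exact heq i hli hik

lemma memFlags_flagSplice {t b : S.FaceS} {F G : ℕ → S.FaceS} (hlk : l ≤ k) (hkm : k < m)
    (hG : MemFlags S l k (F k) b G) (hF : MemFlags S l m t b F) :
    MemFlags S l m t b (flagSplice k G F) := by
  obtain ⟨⟨hGdim, hGbd⟩, hGk, hGl⟩ := hG
  obtain ⟨⟨hFdim, hFbd⟩, hFm, -⟩ := hF
  refine ⟨⟨fun i hli him => ?_, fun i hli him => ?_⟩, ?_, ?_⟩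
  · rcases le_or_gt i k with hik | hik
    · rw [flagSplice_of_le G F hik]; exact hGdim i hli hik
    · rw [flagSplice_of_lt G F hik]; exact hFdim i hli him
  · rcases lt_trichotomy i k with hik | rfl | hik
    · rw [flagSplice_of_le G F hik.le, flagSplice_of_le G F hik]; exact hGbd i hli hik
    · rw [flagSplice_of_le G F le_rfl, flagSplice_of_lt G F i.lt_succ_self, hGk]
      exact hFbd i hli him
    · rw [flagSplice_of_lt G F hik, flagSplice_of_lt G F (hik.trans i.lt_succ_self)]
      exact hFbd i hli him
  · rwa [flagSplice_of_lt G F hkm]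
  · rwa [flagSplice_of_le G F hlk]

lemma truncate_initial_flag {t b : S.FaceS} {F : ℕ → S.FaceS} (hlk : l ≤ k) (hkm : k < m)
    (hF : MemFlags S l m t b F)
    (hinit : ∀ G, MemFlags S l m t b G → EqOnFl l m G F ∨ flagLt S l m F G)
    (G : ℕ → S.FaceS) (hG : MemFlags S l k (F k) b G) :
    EqOnFl l k G F ∨ flagLt S l k F G := by
  have hcmp := (hinit _ (memFlags_flagSplice hlk hkm hG hF)).imp_left EqOnFl.symm
  have hsplice : ∀ i ≤ k, flagSplice k G F i = G i := fun i hi => flagSplice_of_le G F hi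
  exact (eqOnFl_or_flagLt_congr (fun _ _ => rfl) hsplice
    (eqOnFl_or_flagLt_truncate hkm.le hcmp)).imp_left EqOnFl.symm

lemma truncate_terminal_flag {t b : S.FaceS} {F : ℕ → S.FaceS} (hlk : l ≤ k) (hkm : k < m)
    (hF : MemFlags S l m t b F)
    (hterm : ∀ G, MemFlags S l m t b G → EqOnFl l m G F ∨ flagLt S l m G F)
    (G : ℕ → S.FaceS) (hG : MemFlags S l k (F k) b G) :
    EqOnFl l k G F ∨ flagLt S l k G F := by
  have hcmp := hterm _ (memFlags_flagSplice hlk hkm hG hF)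
  have hsplice : ∀ i ≤ k, flagSplice k G F i = G i := fun i hi => flagSplice_of_le G F hi
  exact eqOnFl_or_flagLt_congr hsplice (fun _ _ => rfl) (eqOnFl_or_flagLt_truncate hkm.le hcmp)

end

theorem truncation_preserves_order_and_endpoints_general
    (S : PHg) (l k m : ℕ) (hlk : l ≤ k) (hkm : k < m)
    (xm xl : S.FaceS) :
    (∀ F G, MemFlags S l m xm xl F → MemFlags S l m xm xl G →
      flagLt S l m F G → EqOnFl l k F G ∨ flagLt S l k F G) ∧
    (∀ F, MemFlags S l m xm xl F →
      (∀ G, MemFlags S l m xm xl G → EqOnFl l m G F ∨ flagLt S l m F G) →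
      (∀ G, MemFlags S l k (F k) xl G → EqOnFl l k G F ∨ flagLt S l k F G)) ∧
    (∀ F, MemFlags S l m xm xl F →
      (∀ G, MemFlags S l m xm xl G → EqOnFl l m G F ∨ flagLt S l m G F) →
      (∀ G, MemFlags S l k (F k) xl G → EqOnFl l k G F ∨ flagLt S l k G F)) :=
  ⟨fun _ _ _ _ => flagLt_truncate, fun _ hF hinit => truncate_initial_flag hlk hkm hF hinit,
    fun _ hF hterm => truncate_terminal_flag hlk hkm hF hterm⟩

/-- Truncation of flags preserves the flag order (non-strictly) and
sends the initial (resp. terminal) flag to the initial (resp. terminal) flag. -/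
theorem truncation_preserves_order_and_endpoints
    (S : PHg) (hS : IsOpetope S) (l k m : ℕ) (hlk : l ≤ k) (hkm : k < m)
    (xm xl : S.FaceS) (hm : xm.1 = m) (hl : xl.1 = l) :
    (∀ F G, MemFlags S l m xm xl F → MemFlags S l m xm xl G →
      flagLt S l m F G → EqOnFl l k F G ∨ flagLt S l k F G) ∧
    (∀ F, MemFlags S l m xm xl F →
      (∀ G, MemFlags S l m xm xl G → EqOnFl l m G F ∨ flagLt S l m F G) →
      (∀ G, MemFlags S l k (F k) xl G → EqOnFl l k G F ∨ flagLt S l k F G)) ∧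
    (∀ F, MemFlags S l m xm xl F →
      (∀ G, MemFlags S l m xm xl G → EqOnFl l m G F ∨ flagLt S l m G F) →
      (∀ G, MemFlags S l k (F k) xl G → EqOnFl l k G F ∨ flagLt S l k G F)) :=
  truncation_preserves_order_and_endpoints_general S l k m hlk hkm xm xl
end
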